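/- Let $\alpha \in (0,1)$. For the generating function $\omega(\xi) = (1-\xi)^{\alpha}\left[1+\left(\frac{\alpha}{2}-\theta\right)(1-\xi)\right]$ with coefficients $\omega_k$, define $A_k = \tau^{-\alpha}\sum_{j=0}^{k}\omega_j$ for a fixed step size $\tau > 0$. If $\theta \in \left[\frac{\alpha}{2}-\frac{1-\alpha}{1+\alpha}, \frac{\alpha}{2}\right]$, then the sequence $A_k$ is positive and nonincreasing: $A_k \geq A_{k+1} > 0$ for all $k \geq 0$. -/

import Mathlib

noncomputable def genBinom (α : ℝ) (k : ℕ) : ℝ :=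
  (∏ j ∈ Finset.range k, (α - j)) / (Nat.factorial k)

noncomputable def kappa (α : ℝ) (k : ℕ) : ℝ := (-1 : ℝ) ^ k * genBinom α k

/-- Coefficients of `ω(ξ) = (1-ξ)^α [1 + (α/2 - θ)(1-ξ)]`. -/
noncomputable def omegaCoeff (α θ : ℝ) : ℕ → ℝ
  | 0 => 1 + α / 2 - θ
  | (k + 1) => (1 + α / 2 - θ) * kappa α (k + 1) + (θ - α / 2) * kappa α k

open Finset

/-!
`kappa α k` is the `k`-th coefficient of `(1 - ξ)^α`, so its partial sums are the coefficients
`kappa (α - 1) k` of `(1 - ξ)^(α - 1)`, which are positive for `α < 1`. Writing `d = α/2 - θ`,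
both `ω_{k+1}` and the partial sum `∑_{j ≤ k+1} ω_j` factor as a `kappa` coefficient times a
linear expression in `k`; the bounds on `θ`, i.e. `0 ≤ d` and `d (1 + α) ≤ 1 - α`, are exactly
what fixes the signs of these linear factors: `ω_{k+1} ≤ 0` and `∑_{j ≤ k} ω_j > 0`.
-/

lemma kappa_zero (α : ℝ) : kappa α 0 = 1 := by
  simp [kappa, genBinom]

lemma kappa_succ (α : ℝ) (k : ℕ) :
    kappa α (k + 1) = kappa α k * ((k - α) / (k + 1)) := by
  unfold kappa genBinom
  rw [prod_range_succ, Nat.factorial_succ, pow_succ]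
  push_cast
  field_simp
  ring

lemma kappa_succ_eq_neg_mul_kappa_sub_one (α : ℝ) (k : ℕ) :
    kappa α (k + 1) = -(α / (k + 1)) * kappa (α - 1) k := by
  unfold kappa genBinom
  rw [prod_range_succ', Nat.factorial_succ, pow_succ]
  push_cast
  simp only [sub_sub, add_comm (1 : ℝ), sub_zero]
  field_simp

lemma kappa_pos_of_neg {β : ℝ} (hβ : β < 0) (k : ℕ) : 0 < kappa β k := by
  induction k with
  | zero => simp [kappa_zero]
  | succ k ih =>
    rw [kappa_succ]
    exact mul_pos ih (div_pos (by linarith [k.cast_nonneg (α := ℝ)]) (by positivity))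

lemma kappa_neg {α : ℝ} (hα₀ : 0 < α) (hα₁ : α < 1) {k : ℕ} (hk : k ≠ 0) : kappa α k < 0 := by
  obtain ⟨k, rfl⟩ := Nat.exists_eq_succ_of_ne_zero hk
  rw [kappa_succ_eq_neg_mul_kappa_sub_one, neg_mul]
  exact neg_neg_of_pos (mul_pos (by positivity) (kappa_pos_of_neg (by linarith) k))

/-- Pascal's rule in the form `(1 - ξ)^α = (1 - ξ) (1 - ξ)^(α - 1)`, summed up. -/
lemma sum_range_succ_kappa (α : ℝ) (k : ℕ) :
    ∑ j ∈ range (k + 1), kappa α j = kappa (α - 1) k := by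
  induction k with
  | zero => simp [kappa_zero]
  | succ k ih =>
    rw [sum_range_succ, ih, kappa_succ (α - 1), kappa_succ_eq_neg_mul_kappa_sub_one]
    field_simp
    ring

lemma omegaCoeff_succ (α θ : ℝ) (k : ℕ) :
    omegaCoeff α θ (k + 1) = kappa α k * ((k - α - (α / 2 - θ) * (1 + α)) / (k + 1)) := by
  rw [omegaCoeff, kappa_succ]
  field_simp
  ring

lemma omegaCoeff_succ_nonpos {α θ : ℝ} (hα₀ : 0 < α) (hα₁ : α < 1) (hd₀ : 0 ≤ α / 2 - θ)
    (hd₁ : (α / 2 - θ) * (1 + α) ≤ 1 - α) (k : ℕ) : omegaCoeff α θ (k + 1) ≤ 0 := by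
  rw [omegaCoeff_succ]
  rcases Nat.eq_zero_or_pos k with rfl | hk
  · rw [kappa_zero, one_mul, Nat.cast_zero, zero_add, div_one]
    nlinarith
  · have hk₁ : (1 : ℝ) ≤ k := by exact_mod_cast hk
    exact mul_nonpos_of_nonpos_of_nonneg (kappa_neg hα₀ hα₁ hk.ne').le
      (div_nonneg (by linarith) (by positivity))

lemma sum_range_omegaCoeff (α θ : ℝ) (k : ℕ) :
    ∑ j ∈ range (k + 1), omegaCoeff α θ j =
      (1 + α / 2 - θ) * ∑ j ∈ range (k + 1), kappa α j + (θ - α / 2) * ∑ j ∈ range k, kappa α j := by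
  induction k with
  | zero => simp [omegaCoeff, kappa_zero]
  | succ k ih =>
    rw [sum_range_succ, ih, omegaCoeff, sum_range_succ _ (k + 1), sum_range_succ _ k]
    ring

lemma sum_range_omegaCoeff_pos {α θ : ℝ} (hα₀ : 0 < α) (hα₁ : α < 1) (hd₀ : 0 ≤ α / 2 - θ)
    (hd₁ : (α / 2 - θ) * (1 + α) ≤ 1 - α) (k : ℕ) : 0 < ∑ j ∈ range (k + 1), omegaCoeff α θ j := by
  cases k with
  | zero =>
    simp only [zero_add, sum_range_one, omegaCoeff]
    linarith
  | succ k =>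
    have hfactor : ∑ j ∈ range (k + 2), omegaCoeff α θ j =
        kappa (α - 1) k * ((k + 1 - α - (α / 2 - θ) * α) / (k + 1)) := by
      rw [sum_range_omegaCoeff, sum_range_succ_kappa, sum_range_succ_kappa, kappa_succ (α - 1)]
      field_simp
      ring
    rw [hfactor]
    refine mul_pos (kappa_pos_of_neg (by linarith) k) (div_pos ?_ (by positivity))
    nlinarith [k.cast_nonneg (α := ℝ)]

/-- With `A_k = τ^{-α} ∑_{j=0}^k ω_j`, the sequence `A_k` is positive and
nonincreasing: `A_k ≥ A_{k+1} > 0`. -/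
theorem stmt9 (α θ τ : ℝ) (hα : α ∈ Set.Ioo (0 : ℝ) 1) (hτ : 0 < τ)
    (hθ : θ ∈ Set.Icc (α / 2 - (1 - α) / (1 + α)) (α / 2))
    (A : ℕ → ℝ)
    (hA : ∀ k : ℕ, A k = τ ^ (-α) * ∑ j ∈ Finset.range (k + 1), omegaCoeff α θ j) :
    ∀ k : ℕ, A (k + 1) ≤ A k ∧ 0 < A k := by
  obtain ⟨hα₀, hα₁⟩ := hα
  have hd₀ : 0 ≤ α / 2 - θ := by linarith [hθ.2]
  have hd₁ : (α / 2 - θ) * (1 + α) ≤ 1 - α := by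
    rw [← le_div_iff₀ (by linarith)]
    linarith [hθ.1]
  have hτα : 0 < τ ^ (-α) := Real.rpow_pos_of_pos hτ _
  intro k
  refine ⟨?_, ?_⟩
  · rw [hA, hA, sum_range_succ _ (k + 1)]
    exact mul_le_mul_of_nonneg_left
      (add_le_of_nonpos_right (omegaCoeff_succ_nonpos hα₀ hα₁ hd₀ hd₁ k)) hτα.le
  · rw [hA]
    exact mul_pos hτα (sum_range_omegaCoeff_pos hα₀ hα₁ hd₀ hd₁ k)
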